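/- arXiv:2204.10203 — 4 statements merged into one kernel-verified Lean document; each statement's English description precedes it below -/
import Mathlib

section
/- Let f : Finset P → ℝ be non-negative, monotone, and submodular with f(∅) = 0, and let b ≥ 1. Let Greedy be the set obtained by b steps of greedy selection (at each step adding an element maximizing the marginal gain of f). Then f(Greedy) ≥ (1 − (1 − 1/b)^b) · f(OPT) ≥ (1 − 1/e) · f(OPT), where OPT is any subset of cardinality at most b maximizing f. -/
/-- Nemhauser–Wolsey–Fisher greedy guarantee for monotone submodular functions. -/
theorem greedy_submodular_guarantee
    {P : Type*} [Fintype P] [Nonempty P] [DecidableEq P]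
    (f : Finset P → ℝ)
    (hnonneg : ∀ S : Finset P, 0 ≤ f S)
    (hempty : f ∅ = 0)
    (hmono : ∀ (S T : Finset P), S ⊆ T → f S ≤ f T)
    (hsub : ∀ (S T : Finset P) (p : P), S ⊆ T → p ∉ T →
      f (T ∪ {p}) - f T ≤ f (S ∪ {p}) - f S)
    (b : ℕ) (hb : 1 ≤ b)
    (G : ℕ → Finset P) (hG0 : G 0 = ∅)
    (hGreedy : ∀ i, ∃ p : P, G (i + 1) = insert p (G i) ∧
      ∀ q : P, f (insert q (G i)) ≤ f (insert p (G i)))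
    (OPT : Finset P) (hOPTcard : OPT.card ≤ b)
    (hOPT : ∀ S : Finset P, S.card ≤ b → f S ≤ f OPT) :
    f (G b) ≥ (1 - (1 - 1 / (b : ℝ)) ^ b) * f OPT ∧
    (1 - (1 - 1 / (b : ℝ)) ^ b) * f OPT ≥ (1 - 1 / Real.exp 1) * f OPT := by
  classical
  have hbR : (1 : ℝ) ≤ (b : ℝ) := by exact_mod_cast hb
  have hbpos : (0 : ℝ) < (b : ℝ) := by linarith
  have h1b : (0 : ℝ) ≤ 1 - 1 / (b : ℝ) := by
    have : 1 / (b : ℝ) ≤ 1 := by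
      rw [div_le_one hbpos]; exact hbR
    linarith
  -- marginal sum lemma
  have hmarg : ∀ S T : Finset P,
      f (T ∪ S) ≤ f T + ∑ p ∈ S \ T, (f (insert p T) - f T) := by
    intro S
    induction S using Finset.induction_on with
    | empty => intro T; simp
    | @insert a S ha ih =>
      intro T
      by_cases haT : a ∈ T
      · have h1 : T ∪ insert a S = T ∪ S := by
          rw [Finset.union_insert, Finset.insert_eq_self.mpr (Finset.mem_union_left _ haT)]
        have h2 : insert a S \ T = S \ T := Finset.insert_sdiff_of_mem S haT
        rw [h1, h2]; exact ih T
      · have haTS : a ∉ T ∪ S ∨ a ∈ S := by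
          by_cases h : a ∈ S
          · exact Or.inr h
          · exact Or.inl (by simp [haT, h])
        have h1 : T ∪ insert a S = insert a (T ∪ S) := by simp
        have h2 : insert a S \ T = insert a (S \ T) := Finset.insert_sdiff_of_notMem S haT
        have haS : a ∉ S \ T := fun h => ha (Finset.mem_sdiff.mp h).1
        rw [h1, h2, Finset.sum_insert haS]
        have hnotTS : a ∉ T ∪ S := by
          simp only [Finset.mem_union]; push_neg; exact ⟨haT, ha⟩
        have hsub' := hsub T (T ∪ S) a Finset.subset_union_left hnotTS
        simp only [Finset.union_comm _ ({a} : Finset P), ← Finset.insert_eq] at hsub'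
        have := ih T
        linarith
  -- one-step contraction
  have step : ∀ i, f OPT - f (G (i + 1)) ≤ (1 - 1 / (b : ℝ)) * (f OPT - f (G i)) := by
    intro i
    obtain ⟨p, hp, hmax⟩ := hGreedy i
    have hsubset : G i ⊆ G (i + 1) := by rw [hp]; exact Finset.subset_insert _ _
    have hgain : 0 ≤ f (G (i + 1)) - f (G i) := by
      have := hmono (G i) (G (i + 1)) hsubset; linarith
    -- sum bound
    have hsum : ∑ q ∈ OPT \ G i, (f (insert q (G i)) - f (G i))
        ≤ (OPT \ G i).card * (f (G (i + 1)) - f (G i)) := by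
      have : ∀ q ∈ OPT \ G i, f (insert q (G i)) - f (G i) ≤ f (G (i + 1)) - f (G i) := by
        intro q _
        have := hmax q
        rw [hp]; linarith
      calc ∑ q ∈ OPT \ G i, (f (insert q (G i)) - f (G i))
          ≤ ∑ _q ∈ OPT \ G i, (f (G (i + 1)) - f (G i)) := Finset.sum_le_sum this
        _ = (OPT \ G i).card * (f (G (i + 1)) - f (G i)) := by
            rw [Finset.sum_const, nsmul_eq_mul]
    have hcard : ((OPT \ G i).card : ℝ) ≤ (b : ℝ) := by
      exact_mod_cast le_trans (Finset.card_le_card (Finset.sdiff_subset)) hOPTcard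
    have hOle : f OPT ≤ f (G i) + (b : ℝ) * (f (G (i + 1)) - f (G i)) := by
      have h1 : f OPT ≤ f (G i ∪ OPT) := hmono _ _ Finset.subset_union_right
      have h2 := hmarg OPT (G i)
      have h3 : ((OPT \ G i).card : ℝ) * (f (G (i + 1)) - f (G i))
          ≤ (b : ℝ) * (f (G (i + 1)) - f (G i)) :=
        mul_le_mul_of_nonneg_right hcard hgain
      linarith
    have hdiv : (f OPT - f (G i)) / (b : ℝ) ≤ f (G (i + 1)) - f (G i) := by
      rw [div_le_iff₀ hbpos]; linarith
    have hexp : (1 - 1 / (b : ℝ)) * (f OPT - f (G i))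
        = (f OPT - f (G i)) - (f OPT - f (G i)) / (b : ℝ) := by ring
    linarith
  -- induction
  have main : ∀ n, f OPT - f (G n) ≤ (1 - 1 / (b : ℝ)) ^ n * f OPT := by
    intro n
    induction n with
    | zero => simp [hG0, hempty]
    | succ n ih =>
      have h1 := step n
      have h2 : (1 - 1 / (b : ℝ)) * (f OPT - f (G n))
          ≤ (1 - 1 / (b : ℝ)) * ((1 - 1 / (b : ℝ)) ^ n * f OPT) :=
        mul_le_mul_of_nonneg_left ih h1b
      calc f OPT - f (G (n + 1)) ≤ (1 - 1 / (b : ℝ)) * (f OPT - f (G n)) := h1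
        _ ≤ (1 - 1 / (b : ℝ)) * ((1 - 1 / (b : ℝ)) ^ n * f OPT) := h2
        _ = (1 - 1 / (b : ℝ)) ^ (n + 1) * f OPT := by ring
  constructor
  · have := main b
    have hexp : (1 - (1 - 1 / (b : ℝ)) ^ b) * f OPT
        = f OPT - (1 - 1 / (b : ℝ)) ^ b * f OPT := by ring
    linarith
  · have hle : 1 - 1 / (b : ℝ) ≤ Real.exp (-(1 / (b : ℝ))) := by
      have := Real.add_one_le_exp (-(1 / (b : ℝ))); linarith
    have hpow : (1 - 1 / (b : ℝ)) ^ b ≤ (Real.exp (-(1 / (b : ℝ)))) ^ b :=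
      pow_le_pow_left₀ h1b hle b
    have hexpb : (Real.exp (-(1 / (b : ℝ)))) ^ b = 1 / Real.exp 1 := by
      rw [← Real.exp_nat_mul]
      have hbne : (b : ℝ) ≠ 0 := ne_of_gt hbpos
      have : (b : ℝ) * -(1 / (b : ℝ)) = -1 := by field_simp
      rw [this, Real.exp_neg, one_div]
    rw [hexpb] at hpow
    have : 1 - 1 / Real.exp 1 ≤ 1 - (1 - 1 / (b : ℝ)) ^ b := by linarith
    exact mul_le_mul_of_nonneg_right this (hnonneg OPT)
end

section
/- The Maximum Coverage objective is a special case of the MaxInfBRkNN objective: if every user in ⋃_{p∈P_c} S_r(p) has no out-neighbors in the social graph (so influence propagation stops immediately), then for every set P_i ⊆ P_c, the influence I_p(P_i) equals |⋃_{p∈P_i} S_r(p)|. -/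
open Relation

/-- When no user in `⋃_{p∈Pc} Sr p` has out-neighbors, the influence of `Pi ⊆ Pc`
equals the cardinality of `⋃_{p∈Pi} Sr p` (MaxInfBRkNN generalizes Max Coverage). -/
theorem influence_eq_coverage_of_no_out_neighbors
    {U P G : Type*} [Fintype U] [Fintype G] [DecidableEq U]
    (Sr : P → Finset U) (Pc : Finset P)
    (Pr : G → ℝ) (hPr : ∀ g, 0 ≤ Pr g) (hPrsum : ∑ g : G, Pr g = 1)
    (E : G → U → U → Prop)
    (I : Finset U → ℝ)
    (hI : ∀ S : Finset U,
      I S = ∑ g : G, Pr g * (Set.ncard {u : U | ∃ s ∈ S, ReflTransGen (E g) s u} : ℝ))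
    (hnoout : ∀ u ∈ Pc.biUnion Sr, ∀ g : G, ∀ v : U, ¬ E g u v) :
    ∀ Pi : Finset P, Pi ⊆ Pc →
      I (Pi.biUnion Sr) = ((Pi.biUnion Sr).card : ℝ) := by
  intro Pi hPi
  have hset : ∀ g : G,
      {u : U | ∃ s ∈ Pi.biUnion Sr, ReflTransGen (E g) s u} = ↑(Pi.biUnion Sr) := by
    intro g
    ext u
    simp only [Set.mem_setOf_eq, Finset.coe_biUnion, Set.mem_iUnion, Finset.mem_coe]
    constructor
    · rintro ⟨s, hs, hr⟩
      have hsPc : s ∈ Pc.biUnion Sr := by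
        simp only [Finset.mem_biUnion] at hs ⊢
        obtain ⟨p, hp, hsp⟩ := hs
        exact ⟨p, hPi hp, hsp⟩
      have : u = s := by
        cases hr.cases_head with
        | inl h => exact h.symm
        | inr h => exact absurd h.choose_spec.1 (hnoout s hsPc g _)
      subst this
      simpa using hs
    · intro hu
      refine ⟨u, ?_, ReflTransGen.refl⟩
      simpa using hu
  rw [hI]
  have : ∀ g : G, (Set.ncard {u : U | ∃ s ∈ Pi.biUnion Sr, ReflTransGen (E g) s u} : ℝ)
      = ((Pi.biUnion Sr).card : ℝ) := by
    intro g
    rw [hset g, Set.ncard_coe_finset]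
  simp_rw [this]
  rw [← Finset.sum_mul, hPrsum, one_mul]
end

section
/- Greedy on coverage functions: let R : P → Finset W assign to each element of a finite type P a finite set, and let cov(S) = |⋃_{p∈S} R(p)|. If G_b is obtained by b greedy steps (each step adding an element with maximum marginal coverage gain), then for every set O with |O| ≤ b: cov(G_b) ≥ (1 − (1 − 1/b)^b) · cov(O). -/
/-- Greedy guarantee for coverage functions. -/
theorem greedy_coverage_guarantee
    {P W : Type*} [Fintype P] [Fintype W] [DecidableEq P] [DecidableEq W]
    (R : P → Finset W)
    (cov : Finset P → ℝ)
    (hcov : ∀ S : Finset P, cov S = ((S.biUnion R).card : ℝ))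
    (b : ℕ) (hb : 1 ≤ b)
    (G : ℕ → Finset P) (hG0 : G 0 = ∅)
    (hGreedy : ∀ i, ∃ p : P, G (i + 1) = insert p (G i) ∧
      ∀ q : P, cov (insert q (G i)) ≤ cov (insert p (G i)))
    (O : Finset P) (hO : O.card ≤ b) :
    cov (G b) ≥ (1 - (1 - 1 / (b : ℝ)) ^ b) * cov O := by
  have hb0 : (0:ℝ) < b := by exact_mod_cast Nat.lt_of_lt_of_le Nat.zero_lt_one hb
  have hmono : ∀ S T : Finset P, S ⊆ T → cov S ≤ cov T := by
    intro S T hST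
    rw [hcov, hcov]
    exact_mod_cast Finset.card_le_card
      (Finset.biUnion_subset_biUnion_of_subset_left R hST)
  -- key submodular-type bound
  have hsub : ∀ Gi : Finset P,
      cov O ≤ cov Gi + ∑ o ∈ O, (cov (insert o Gi) - cov Gi) := by
    intro Gi
    set U := Gi.biUnion R with hU
    have hterm : ∀ o : P, cov (insert o Gi) - cov Gi = ((R o \ U).card : ℝ) := by
      intro o
      rw [hcov, hcov, Finset.biUnion_insert]
      have h := Finset.card_sdiff_add_card (R o) U
      have h' : ((R o ∪ U).card : ℝ) = ((R o \ U).card : ℝ) + (U.card : ℝ) := by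
        exact_mod_cast h.symm
      rw [← hU, h']
      ring
    have h1 : O.biUnion R ⊆ U ∪ O.biUnion (fun o => R o \ U) := by
      intro w hw
      simp only [Finset.mem_biUnion, Finset.mem_union, Finset.mem_sdiff] at *
      obtain ⟨o, ho, hwo⟩ := hw
      by_cases hwU : w ∈ U
      · exact Or.inl hwU
      · exact Or.inr ⟨o, ho, hwo, hwU⟩
    have h2 : (O.biUnion R).card ≤ U.card + ∑ o ∈ O, (R o \ U).card := by
      refine le_trans (Finset.card_le_card h1) ?_
      refine le_trans (Finset.card_union_le _ _) ?_
      exact Nat.add_le_add_left (Finset.card_biUnion_le) _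
    have h2' : ((O.biUnion R).card : ℝ) ≤ (U.card : ℝ) + ∑ o ∈ O, ((R o \ U).card : ℝ) := by
      exact_mod_cast h2
    have hsumeq : ∑ o ∈ O, (cov (insert o Gi) - cov Gi) = ∑ o ∈ O, ((R o \ U).card : ℝ) :=
      Finset.sum_congr rfl (fun o _ => hterm o)
    rw [hsumeq, hcov O, hcov Gi, ← hU]
    exact h2'
  have hfac : (0:ℝ) ≤ 1 - 1/(b:ℝ) := by
    rw [sub_nonneg, div_le_one hb0]
    exact_mod_cast hb
  have step : ∀ i, cov O - cov (G (i+1)) ≤ (1 - 1/(b:ℝ)) * (cov O - cov (G i)) := by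
    intro i
    obtain ⟨p, hp, hpmax⟩ := hGreedy i
    have hgain0 : cov (G i) ≤ cov (G (i+1)) := by
      rw [hp]; exact hmono _ _ (Finset.subset_insert _ _)
    by_cases hd : cov O - cov (G i) ≤ 0
    · have h5 : (1 - 1/(b:ℝ)) * (cov O - cov (G i)) - (cov O - cov (G i))
          = -(1/(b:ℝ)) * (cov O - cov (G i)) := by ring
      have hbpos : (0:ℝ) < 1/(b:ℝ) := by positivity
      nlinarith
    · push_neg at hd
      have hOsum : cov O - cov (G i) ≤ ∑ o ∈ O, (cov (insert o (G i)) - cov (G i)) := by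
        have := hsub (G i); linarith
      have hbound : ∑ o ∈ O, (cov (insert o (G i)) - cov (G i))
          ≤ (O.card : ℝ) * (cov (G (i+1)) - cov (G i)) := by
        rw [hp]
        calc ∑ o ∈ O, (cov (insert o (G i)) - cov (G i))
            ≤ ∑ _o ∈ O, (cov (insert p (G i)) - cov (G i)) :=
              Finset.sum_le_sum (fun o _ => by linarith [hpmax o])
          _ = (O.card : ℝ) * (cov (insert p (G i)) - cov (G i)) := by
              rw [Finset.sum_const, nsmul_eq_mul]
      have hcard : (O.card : ℝ) ≤ (b : ℝ) := by exact_mod_cast hO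
      have hgain : cov O - cov (G i) ≤ (b:ℝ) * (cov (G (i+1)) - cov (G i)) := by
        have h3 : (O.card:ℝ) * (cov (G (i+1)) - cov (G i))
            ≤ (b:ℝ) * (cov (G (i+1)) - cov (G i)) :=
          mul_le_mul_of_nonneg_right hcard (by linarith)
        linarith
      have h4 : (cov O - cov (G i)) / (b:ℝ) ≤ cov (G (i+1)) - cov (G i) := by
        rw [div_le_iff₀ hb0]
        nlinarith
      have h7 : (1 - 1/(b:ℝ)) * (cov O - cov (G i))
          = (cov O - cov (G i)) - (cov O - cov (G i))/(b:ℝ) := by ring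
      linarith
  have hind : ∀ i, cov O - cov (G i) ≤ (1 - 1/(b:ℝ))^i * cov O := by
    intro i
    induction i with
    | zero => simp [hG0, hcov]
    | succ n ih =>
      calc cov O - cov (G (n+1)) ≤ (1 - 1/(b:ℝ)) * (cov O - cov (G n)) := step n
        _ ≤ (1 - 1/(b:ℝ)) * ((1 - 1/(b:ℝ))^n * cov O) :=
            mul_le_mul_of_nonneg_left ih hfac
        _ = (1 - 1/(b:ℝ))^(n+1) * cov O := by ring
  have hfin := hind b
  have hexp : (1 - (1 - 1/(b:ℝ))^b) * cov O = cov O - (1 - 1/(b:ℝ))^b * cov O := by ring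
  linarith
end

section
/- Group pruning correctness (Lemma 6): in the setting of the pseudo-user bound, suppose additionally that for the pseudo-user u_ps there exist k distinct POIs p₁,…,p_k (all ≠ p) such that for every u ∈ U', F(u, pᵢ) ≥ F(u_ps, p) for each i. Then for every u ∈ U', at least k other POIs have scores ≥ F(u, p); hence no u ∈ U' has p in its top-k set, i.e., U' ∩ S_r(p) = ∅. -/
open scoped Classical

/-- Group pruning correctness (Lemma 6): if `k` POIs different from `p` outscore
the pseudo-user's score of `p` for all users in `U'`, then no user in `U'` has
`p` in its top-k set. -/
theorem group_pruning_correctness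
    {U P : Type*} [Fintype P]
    (F : U → P → ℝ) (k : ℕ) (hk : 1 ≤ k)
    (p : P) (U' : Set U) (ups : U)
    (hdom : ∀ u ∈ U', F u p ≤ F ups p)
    (ps : Finset P) (hpscard : ps.card = k) (hpnotin : p ∉ ps)
    (hps : ∀ u ∈ U', ∀ q ∈ ps, F ups p ≤ F u q)
    (St : U → Finset P)
    (hSt : ∀ u q, q ∈ St u →
      (Finset.univ.filter (fun r : P => r ≠ q ∧ F u q ≤ F u r)).card < k) :
    (∀ u ∈ U', k ≤ (Finset.univ.filter (fun r : P => r ≠ p ∧ F u p ≤ F u r)).card) ∧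
    (∀ u ∈ U', p ∉ St u) := by
  have key : ∀ u ∈ U', k ≤ (Finset.univ.filter (fun r : P => r ≠ p ∧ F u p ≤ F u r)).card := by
    intro u hu
    rw [← hpscard]
    apply Finset.card_le_card
    intro q hq
    simp only [Finset.mem_filter, Finset.mem_univ, true_and]
    exact ⟨fun h => hpnotin (h ▸ hq), le_trans (hdom u hu) (hps u hu q hq)⟩
  refine ⟨key, fun u hu hmem => ?_⟩
  exact absurd (key u hu) (not_le.mpr (hSt u p hmem))
end
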